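/- For a non-optimal feasible flow x, the smallest ε ≥ 0 for which x is ε-optimal equals the negative of the minimum mean cost of a directed cycle in the residual network G_x; for an optimal flow x, this value is 0. -/

import Mathlib

open Finset

variable {V A : Type}

/-- Excess of node `i` with respect to pseudoflow `x` and supplies `b`. -/
def excess [Fintype A] [DecidableEq V] (src tgt : A → V) (b : V → ℤ)
    (x : A → ℤ) (i : V) : ℤ :=
  b i + ∑ a ∈ Finset.univ.filter (fun a => tgt a = i), x a
      - ∑ a ∈ Finset.univ.filter (fun a => src a = i), x a

/-- A pseudoflow obeys the nonnegativity and capacity constraints. -/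
def IsPseudoflow (cap x : A → ℤ) : Prop := ∀ a, 0 ≤ x a ∧ x a ≤ cap a

/-- A feasible flow: pseudoflow satisfying the conservation constraints. -/
def IsFeasible [Fintype A] [DecidableEq V] (src tgt : A → V) (b : V → ℤ)
    (cap x : A → ℤ) : Prop :=
  IsPseudoflow cap x ∧ ∀ i, excess src tgt b x i = 0

/-- Total cost of a flow. -/
def flowCost [Fintype A] (c x : A → ℤ) : ℤ := ∑ a, c a * x a

/-- An optimal solution of the minimum-cost flow problem. -/
def IsOptimal [Fintype A] [DecidableEq V] (src tgt : A → V) (b : V → ℤ)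
    (cap c x : A → ℤ) : Prop :=
  IsFeasible src tgt b cap x ∧
    ∀ y, IsFeasible src tgt b cap y → flowCost c x ≤ flowCost c y

/-- Source of a residual arc: `(a, true)` is the forward copy of `a`,
`(a, false)` the backward copy. -/
def rsrc (src tgt : A → V) (p : A × Bool) : V := if p.2 then src p.1 else tgt p.1

/-- Target of a residual arc. -/
def rtgt (src tgt : A → V) (p : A × Bool) : V := if p.2 then tgt p.1 else src p.1

/-- Cost of a residual arc. -/
def rcost (c : A → ℤ) (p : A × Bool) : ℤ := if p.2 then c p.1 else -c p.1

/-- Whether a (forward/backward) arc is present in the residual network of `x`. -/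
def IsResidual (cap x : A → ℤ) (p : A × Bool) : Prop :=
  if p.2 then x p.1 < cap p.1 else 0 < x p.1

/-- Reduced cost of a residual arc with respect to potentials `π`. -/
def redcost (src tgt : A → V) (c : A → ℤ) (π : V → ℝ) (p : A × Bool) : ℝ :=
  (rcost c p : ℝ) + π (rsrc src tgt p) - π (rtgt src tgt p)

/-- A directed cycle (closed directed walk), given by `k > 0` arcs in cyclic order. -/
def IsCycle {E : Type} (s t : E → V) {k : ℕ} (hk : 0 < k) (cyc : Fin k → E) : Prop :=
  ∀ i : Fin k, t (cyc i) = s (cyc ⟨(i.1 + 1) % k, Nat.mod_lt _ hk⟩)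

/-- Underlying undirected (simple) graph of the arcs in `T`. -/
def underlying (src tgt : A → V) (T : Finset A) : SimpleGraph V where
  Adj i j := i ≠ j ∧ ∃ a ∈ T, (src a = i ∧ tgt a = j) ∨ (src a = j ∧ tgt a = i)
  symm := ⟨by
    rintro i j ⟨hij, a, haT, h⟩
    exact ⟨hij.symm, a, haT, h.symm⟩⟩
  loopless := ⟨by rintro i ⟨h, -⟩; exact h rfl⟩

/-- Total excess of the excess nodes. -/
def totalExcess [Fintype V] [Fintype A] [DecidableEq V]
    (src tgt : A → V) (b : V → ℤ) (x : A → ℤ) : ℤ :=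
  ∑ i ∈ Finset.univ.filter (fun i => 0 < excess src tgt b x i), excess src tgt b x i

/-!
If potentials `π` witness `ε`-optimality, the reduced costs on residual arcs are `≥ -ε`; they
telescope around a cycle to its cost, so every residual cycle has mean cost `≥ -ε`. Conversely,
let `μ` be at most every simple residual cycle mean. Then the costs `c - μ` have no negative
simple cycle, so cutting closed subwalks out of a walk never increases its cost, minimum costs
over simple paths bound all walks, and `π v := -(least cost of a simple path from v)` satisfies
Bellman's inequality: all reduced costs are `≥ μ`.

With `μ = 0` such potentials certify optimality, since the cost difference to any feasible flow
is a sum of reduced costs times flow differences; and augmenting one unit around a negative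
simple cycle shows that an optimal flow has none. So the minimum cycle mean is negative exactly
when `x` is not optimal, and `ε(x)` is its negative or `0` accordingly.
-/

section Walks

variable {E : Type} {s t : E → V}

def IsWalk (s t : E → V) : V → List E → V → Prop
  | u, [], w => u = w
  | u, e :: l, w => s e = u ∧ IsWalk s t (t e) l w

theorem isWalk_append {u w : V} {l₁ l₂ : List E} :
    IsWalk s t u (l₁ ++ l₂) w ↔ ∃ v, IsWalk s t u l₁ v ∧ IsWalk s t v l₂ w := by
  induction l₁ generalizing u with
  | nil => simp [IsWalk]
  | cons e l₁ ih => simp [IsWalk, ih, and_assoc]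

theorem IsWalk.tgt_getElem {u w : V} {l : List E} (h : IsWalk s t u l w) {i : ℕ}
    (hi : i + 1 < l.length) : t l[i] = s l[i + 1] := by
  induction l generalizing u i with
  | nil => simp at hi
  | cons e l ih =>
    cases l with
    | nil => simp at hi
    | cons e' l =>
      cases i with
      | zero => exact h.2.1.symm
      | succ i => exact ih h.2 (by simpa using hi)

theorem IsWalk.tgt_getLast {u w : V} {l : List E} (h : IsWalk s t u l w) (hl : l ≠ []) :
    t (l.getLast hl) = w := by
  rw [← List.dropLast_append_getLast hl, isWalk_append] at h
  obtain ⟨v, -, rfl, rfl⟩ := h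
  rfl

theorem IsWalk.isCycle {v : V} {l : List E} (h : IsWalk s t v l v) (hl : 0 < l.length) :
    IsCycle s t hl (fun i : Fin l.length => l[i.1]) := by
  intro ⟨i, hi⟩
  by_cases hlast : i + 1 < l.length
  · simp only [Nat.mod_eq_of_lt hlast]
    exact h.tgt_getElem hlast
  · obtain rfl : i = l.length - 1 := by omega
    cases l with
    | nil => simp at hl
    | cons e l =>
      simp only [Nat.sub_add_cancel hl, Nat.mod_self]
      rw [← List.getLast_eq_getElem (List.cons_ne_nil e l), h.tgt_getLast]
      exact h.1.symm

theorem IsCycle.sum_comp_tgt {M : Type} [AddCommMonoid M] {k : ℕ} {hk : 0 < k} {cyc : Fin k → E}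
    (hcyc : IsCycle s t hk cyc) (F : V → M) :
    ∑ i, F (t (cyc i)) = ∑ i, F (s (cyc i)) := by
  obtain ⟨n, rfl⟩ := Nat.exists_eq_add_one_of_ne_zero hk.ne'
  rw [← Equiv.sum_comp (finRotate (n + 1)) fun i => F (s (cyc i))]
  refine sum_congr rfl fun i _ => congrArg F ((hcyc i).trans ?_)
  congr 2
  ext
  simp [Fin.val_add]

theorem List.exists_eq_append_cons_append_cons_of_not_nodup_map {α β : Type} {g : α → β}
    {l : List α} (hl : ¬(l.map g).Nodup) :
    ∃ l₁ e l₂ e' l₃, l = l₁ ++ e :: l₂ ++ e' :: l₃ ∧ g e = g e' := by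
  induction l with
  | nil => simp at hl
  | cons e l ih =>
    by_cases he : g e ∈ l.map g
    · obtain ⟨e', he', hge⟩ := List.mem_map.1 he
      obtain ⟨l₂, l₃, rfl⟩ := List.append_of_mem he'
      exact ⟨[], e, l₂, e', l₃, rfl, hge.symm⟩
    · obtain ⟨l₁, e₁, l₂, e', l₃, rfl, hg⟩ := ih (by simpa [he] using hl)
      exact ⟨e :: l₁, e₁, l₂, e', l₃, rfl, hg⟩

theorem IsWalk.exists_closed_of_not_nodup {u w : V} {l : List E} (h : IsWalk s t u l w)
    (hl : ¬(l.map s).Nodup) :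
    ∃ l₁ c l₂ v, l = l₁ ++ c ++ l₂ ∧ c ≠ [] ∧ l₂ ≠ [] ∧
      IsWalk s t u l₁ v ∧ IsWalk s t v c v ∧ IsWalk s t v l₂ w := by
  obtain ⟨l₁, e, l₂, e', l₃, rfl, hse⟩ :=
    List.exists_eq_append_cons_append_cons_of_not_nodup_map hl
  obtain ⟨v', h', h₃⟩ := isWalk_append.1 h
  obtain ⟨v, h₁, hc⟩ := isWalk_append.1 h'
  obtain rfl : v = v' := hc.1.symm.trans (hse.trans h₃.1)
  exact ⟨l₁, e :: l₂, e' :: l₃, v, rfl, by simp, by simp, h₁, hc, h₃⟩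

variable (f : E → ℝ)

variable (s t) in
def SimpleCyclesNonneg : Prop :=
  ∀ (k : ℕ) (hk : 0 < k) (cyc : Fin k → E), IsCycle s t hk cyc →
    Function.Injective (s ∘ cyc) → 0 ≤ ∑ i, f (cyc i)

theorem IsWalk.sum_map_nonneg
    (hf : SimpleCyclesNonneg s t f)
    {v : V} {l : List E} (h : IsWalk s t v l v) (hl : l ≠ []) : 0 ≤ (l.map f).sum := by
  by_cases hnd : (l.map s).Nodup
  · have hpos : 0 < l.length := List.length_pos_iff.2 hl
    have hinj : Function.Injective (s ∘ fun i : Fin l.length => l[i.1]) := fun i j hij =>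
      Fin.ext <| (hnd.getElem_inj_iff (hi := by simp) (hj := by simp)).1 (by simpa using hij)
    simpa using hf _ hpos _ (h.isCycle hpos) hinj
  · obtain ⟨l₁, c, l₂, u, hsplit, hc, hl₂, h₁, hcyc, h₂⟩ :=
      h.exists_closed_of_not_nodup hnd
    subst hsplit
    have hc₀ := IsWalk.sum_map_nonneg hf hcyc hc
    have hrest₀ :=
      IsWalk.sum_map_nonneg hf (isWalk_append.2 ⟨u, h₁, h₂⟩) (by simp [hl₂])
    simp only [List.map_append, List.sum_append] at hc₀ hrest₀ ⊢
    linarith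
termination_by l.length
decreasing_by
  all_goals
    have := List.length_pos_iff.2 hc
    have := List.length_pos_iff.2 hl₂
    simp only [hsplit, List.length_append]
    omega

theorem IsWalk.exists_nodup_sum_map_le
    (hf : SimpleCyclesNonneg s t f)
    {u w : V} {l : List E} (h : IsWalk s t u l w) :
    ∃ l', IsWalk s t u l' w ∧ (l'.map s).Nodup ∧ (l'.map f).sum ≤ (l.map f).sum := by
  by_cases hnd : (l.map s).Nodup
  · exact ⟨l, h, hnd, le_rfl⟩
  · obtain ⟨l₁, c, l₂, v, hsplit, hc, hl₂, h₁, hcyc, h₂⟩ :=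
      h.exists_closed_of_not_nodup hnd
    obtain ⟨l', h', hnd', hle⟩ :=
      IsWalk.exists_nodup_sum_map_le hf (isWalk_append.2 ⟨v, h₁, h₂⟩)
    refine ⟨l', h', hnd', hle.trans ?_⟩
    have := hcyc.sum_map_nonneg f hf hc
    simp only [hsplit, List.map_append, List.sum_append] at this ⊢
    linarith
termination_by l.length
decreasing_by
  have := List.length_pos_iff.2 hc
  simp only [hsplit, List.length_append]
  omega

variable (s t) in
def pathsFrom (v : V) : Set (List E) := {l | (l.map s).Nodup ∧ ∃ w, IsWalk s t v l w}

variable (s t) in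
noncomputable def minPathCost (v : V) : ℝ := sInf ((fun l => (l.map f).sum) '' pathsFrom s t v)

theorem pathsFrom_finite [Finite E] (v : V) : (pathsFrom s t v).Finite := by
  have := Fintype.ofFinite E
  refine (List.finite_length_le E (Fintype.card E)).subset fun l hl => ?_
  exact (List.Nodup.of_map s hl.1).length_le_card

theorem exists_isWalk_sum_map_eq_minPathCost [Finite E] (v : V) :
    ∃ l w, IsWalk s t v l w ∧ (l.map f).sum = minPathCost s t f v := by
  obtain ⟨l, ⟨-, w, hl⟩, hmin⟩ :=
    Set.Nonempty.csInf_mem (Set.Nonempty.image _ ⟨[], by simp [pathsFrom, IsWalk]⟩)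
      ((pathsFrom_finite (s := s) (t := t) v).image fun l => (l.map f).sum)
  exact ⟨l, w, hl, hmin⟩

theorem minPathCost_le [Finite E] (hf : SimpleCyclesNonneg s t f) {v w : V} {l : List E}
    (h : IsWalk s t v l w) : minPathCost s t f v ≤ (l.map f).sum := by
  obtain ⟨l', h', hnd', hle⟩ := h.exists_nodup_sum_map_le f hf
  have hmem : (l'.map f).sum ∈ (fun l => (l.map f).sum) '' pathsFrom s t v :=
    ⟨l', ⟨hnd', w, h'⟩, rfl⟩
  exact (csInf_le ((pathsFrom_finite v).image _).bddBelow hmem).trans hle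

theorem exists_potential_of_simpleCyclesNonneg [Finite E]
    (hf : SimpleCyclesNonneg s t f) :
    ∃ π : V → ℝ, ∀ e, π (t e) ≤ π (s e) + f e := by
  refine ⟨fun v => -minPathCost s t f v, fun e => ?_⟩
  obtain ⟨l, w, hl, hmin⟩ := exists_isWalk_sum_map_eq_minPathCost (s := s) (t := t) f (t e)
  have := minPathCost_le f hf (show IsWalk s t (s e) (e :: l) w from ⟨rfl, hl⟩)
  simp only [List.map_cons, List.sum_cons] at this
  linarith

end Walks

section Flows

variable [Fintype A] [DecidableEq V] {src tgt : A → V}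

theorem excess_add (b : V → ℤ) (x z : A → ℤ) (v : V) :
    excess src tgt b (x + z) v = excess src tgt b x v + excess src tgt 0 z v := by
  simp only [excess, Pi.add_apply, sum_add_distrib, Pi.zero_apply]
  ring

theorem excess_zero_sum {ι : Type} (s : Finset ι) (z : ι → A → ℤ) (v : V) :
    excess src tgt 0 (∑ i ∈ s, z i) v = ∑ i ∈ s, excess src tgt 0 (z i) v := by
  simp only [excess, Pi.zero_apply, zero_add, Finset.sum_apply, sum_sub_distrib]
  rw [sum_comm, sum_comm (s := univ.filter _)]

theorem flowCost_add (c x z : A → ℤ) : flowCost c (x + z) = flowCost c x + flowCost c z := by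
  simp only [flowCost, Pi.add_apply, mul_add, sum_add_distrib]

theorem flowCost_sum {ι : Type} (c : A → ℤ) (s : Finset ι) (z : ι → A → ℤ) :
    flowCost c (∑ i ∈ s, z i) = ∑ i ∈ s, flowCost c (z i) := by
  simp only [flowCost, Finset.sum_apply, mul_sum]
  exact sum_comm

theorem sum_potential_mul_eq_zero (π : V → ℝ) {z : A → ℤ}
    (hz : ∀ v, excess src tgt 0 z v = 0) :
    ∑ a, (π (src a) - π (tgt a)) * z a = 0 := by
  set S := univ.image src ∪ univ.image tgt
  have hfib (g : A → V) (hg : ∀ a, g a ∈ S) :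
      ∑ a, π (g a) * z a =
        ∑ v ∈ S, π v * ∑ a ∈ univ.filter (g · = v), (z a : ℝ) := by
    rw [← sum_fiberwise_of_maps_to (fun a _ => hg a)]
    refine sum_congr rfl fun v _ => ?_
    rw [mul_sum]
    exact sum_congr rfl fun a ha => by rw [(mem_filter.1 ha).2]
  have hflow (v : V) : ∑ a ∈ univ.filter (src · = v), (z a : ℝ) =
      ∑ a ∈ univ.filter (tgt · = v), (z a : ℝ) := by
    have := hz v
    simp only [excess, Pi.zero_apply, zero_add] at this
    exact_mod_cast (sub_eq_zero.1 this).symm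
  simp only [sub_mul, sum_sub_distrib]
  rw [hfib src (by simp [S]), hfib tgt (by simp [S])]
  simp only [hflow, sub_self]

variable {b : V → ℤ} {cap c x y : A → ℤ}

theorem IsFeasible.excess_sub (hx : IsFeasible src tgt b cap x)
    (hy : IsFeasible src tgt b cap y) (v : V) : excess src tgt 0 (y - x) v = 0 := by
  have := excess_add (src := src) (tgt := tgt) b x (y - x) v
  rw [add_sub_cancel, hx.2, hy.2] at this
  omega

theorem isOptimal_of_redcost_nonneg (hx : IsFeasible src tgt b cap x) (π : V → ℝ)
    (hπ : ∀ p, IsResidual cap x p → 0 ≤ redcost src tgt c π p) :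
    IsOptimal src tgt b cap c x := by
  refine ⟨hx, fun y hy => ?_⟩
  have hterm (a : A) : 0 ≤ ((c a : ℝ) + π (src a) - π (tgt a)) * (y a - x a : ℤ) := by
    rcases lt_trichotomy (x a) (y a) with hlt | heq | hgt
    · have := hπ (a, true) (show x a < cap a from hlt.trans_le (hy.1 a).2)
      simp only [redcost, rcost, rsrc, rtgt, if_true] at this
      exact mul_nonneg this (by exact_mod_cast (sub_pos.2 hlt).le)
    · simp [heq]
    · have := hπ (a, false) (show 0 < x a from (hy.1 a).1.trans_lt hgt)
      simp only [redcost, rcost, rsrc, rtgt, Bool.false_eq_true, if_false, Int.cast_neg] at this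
      exact mul_nonneg_of_nonpos_of_nonpos (by linarith) (by exact_mod_cast (sub_neg.2 hgt).le)
  have hcost : ((flowCost c y - flowCost c x : ℤ) : ℝ) =
      ∑ a, ((c a : ℝ) + π (src a) - π (tgt a)) * (y a - x a : ℤ) := by
    have hsplit : ∑ a, ((c a : ℝ) + π (src a) - π (tgt a)) * (y a - x a : ℤ) =
        ∑ a, (c a : ℝ) * (y a - x a : ℤ) + ∑ a, (π (src a) - π (tgt a)) * (y - x) a := by
      rw [← sum_add_distrib]
      exact sum_congr rfl fun a _ => by simp only [Pi.sub_apply]; ring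
    rw [hsplit, sum_potential_mul_eq_zero π (hx.excess_sub hy), add_zero]
    push_cast [flowCost]
    simp only [mul_sub, sum_sub_distrib]
  have hgap : (0 : ℝ) ≤ ((flowCost c y - flowCost c x : ℤ) : ℝ) :=
    hcost ▸ sum_nonneg fun a _ => hterm a
  exact sub_nonneg.1 (by exact_mod_cast hgap)

end Flows

section Augmentation

open scoped Classical in
noncomputable def arcFlow (p : A × Bool) : A → ℤ :=
  fun a => (if p = (a, true) then 1 else 0) - (if p = (a, false) then 1 else 0)

open scoped Classical in
theorem sum_arcFlow_apply {k : ℕ} (cyc : Fin k → A × Bool) (a : A) :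
    (∑ i, arcFlow (cyc i)) a =
      #{i | cyc i = (a, true)} - #{i | cyc i = (a, false)} := by
  simp [arcFlow, Finset.sum_apply, sum_sub_distrib, sum_boole]

theorem IsPseudoflow.add_sum_arcFlow {cap x : A → ℤ} {k : ℕ} {cyc : Fin k → A × Bool}
    (hx : IsPseudoflow cap x) (hres : ∀ i, IsResidual cap x (cyc i))
    (hinj : Function.Injective cyc) : IsPseudoflow cap (x + ∑ i, arcFlow (cyc i)) := by
  classical
  intro a
  have hcard (d : Bool) : #{i | cyc i = (a, d)} ≤ 1 :=
    card_le_one.2 fun i hi j hj => hinj ((mem_filter.1 hi).2.trans (mem_filter.1 hj).2.symm)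
  have hres' (d : Bool) (hd : 0 < #{i | cyc i = (a, d)}) : IsResidual cap x (a, d) := by
    obtain ⟨i, hi⟩ := card_pos.1 hd
    exact (mem_filter.1 hi).2 ▸ hres i
  have hfwd : 0 < #{i | cyc i = (a, true)} → x a < cap a := hres' true
  have hbwd : 0 < #{i | cyc i = (a, false)} → 0 < x a := hres' false
  rw [Pi.add_apply, sum_arcFlow_apply]
  have := hx a; have := hcard true; have := hcard false
  omega

variable [Fintype A] [DecidableEq V] {src tgt : A → V} {b : V → ℤ} {cap c x : A → ℤ}

omit [DecidableEq V] in
open scoped Classical in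
theorem flowCost_arcFlow (c : A → ℤ) (p : A × Bool) : flowCost c (arcFlow p) = rcost c p := by
  rcases p with ⟨a, _ | _⟩ <;> simp [flowCost, arcFlow, rcost]

theorem excess_arcFlow (p : A × Bool) (v : V) :
    excess src tgt 0 (arcFlow p) v =
      (if rtgt src tgt p = v then 1 else 0) - (if rsrc src tgt p = v then 1 else 0) := by
  classical
  rcases p with ⟨a, _ | _⟩ <;> simp [excess, arcFlow, rtgt, rsrc, neg_add_eq_sub]

theorem IsCycle.excess_sum_arcFlow {k : ℕ} {hk : 0 < k} {cyc : Fin k → A × Bool}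
    (hcyc : IsCycle (rsrc src tgt) (rtgt src tgt) hk cyc) (v : V) :
    excess src tgt 0 (∑ i, arcFlow (cyc i)) v = 0 := by
  simp only [excess_zero_sum, excess_arcFlow, sum_sub_distrib,
    hcyc.sum_comp_tgt fun u => if u = v then (1 : ℤ) else 0, sub_self]

theorem not_isOptimal_of_sum_rcost_neg (hx : IsFeasible src tgt b cap x) {k : ℕ} {hk : 0 < k}
    {cyc : Fin k → A × Bool} (hres : ∀ i, IsResidual cap x (cyc i))
    (hcyc : IsCycle (rsrc src tgt) (rtgt src tgt) hk cyc)
    (hinj : Function.Injective (rsrc src tgt ∘ cyc)) (hneg : ∑ i, rcost c (cyc i) < 0) :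
    ¬IsOptimal src tgt b cap c x := by
  intro hopt
  have hy : IsFeasible src tgt b cap (x + ∑ i, arcFlow (cyc i)) :=
    ⟨hx.1.add_sum_arcFlow hres hinj.of_comp, fun v => by
      rw [excess_add, hx.2, hcyc.excess_sum_arcFlow, add_zero]⟩
  have := hopt.2 _ hy
  simp only [flowCost_add, flowCost_sum, flowCost_arcFlow] at this
  omega

end Augmentation

section EpsOptimality

variable {src tgt : A → V} {cap c x : A → ℤ}

variable (src tgt cap c x) in
def epsOptimalSet : Set ℝ :=
  {e | 0 ≤ e ∧ ∃ π : V → ℝ, ∀ p, IsResidual cap x p → -e ≤ redcost src tgt c π p}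

variable (src tgt cap c x) in
def residualCycleMeans : Set ℝ :=
  {q | ∃ (k : ℕ) (hk : 0 < k) (cyc : Fin k → A × Bool),
    (∀ i, IsResidual cap x (cyc i)) ∧ IsCycle (rsrc src tgt) (rtgt src tgt) hk cyc ∧
    Function.Injective (fun i => rsrc src tgt (cyc i)) ∧
    q = (∑ i, (rcost c (cyc i) : ℝ)) / k}

theorem neg_le_of_mem_residualCycleMeans {e q : ℝ}
    (he : e ∈ epsOptimalSet src tgt cap c x) (hq : q ∈ residualCycleMeans src tgt cap c x) :
    -e ≤ q := by
  obtain ⟨-, π, hπ⟩ := he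
  obtain ⟨k, hk, cyc, hres, hcyc, -, rfl⟩ := hq
  have htelescope : ∑ i, redcost src tgt c π (cyc i) = ∑ i, (rcost c (cyc i) : ℝ) := by
    simp only [redcost, sum_sub_distrib, sum_add_distrib, hcyc.sum_comp_tgt π,
      add_sub_cancel_right]
  have hbound : k * -e ≤ ∑ i, redcost src tgt c π (cyc i) := by
    simpa using sum_le_sum fun i (_ : i ∈ univ) => hπ (cyc i) (hres i)
  rw [le_div_iff₀ (by exact_mod_cast hk)]
  linarith

variable [Fintype A]

theorem exists_le_redcost_of_le_residualCycleMeans {μ : ℝ}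
    (hμ : ∀ q ∈ residualCycleMeans src tgt cap c x, μ ≤ q) :
    ∃ π : V → ℝ, ∀ p, IsResidual cap x p → μ ≤ redcost src tgt c π p := by
  obtain ⟨π, hπ⟩ := exists_potential_of_simpleCyclesNonneg
    (s := fun p : {p // IsResidual cap x p} => rsrc src tgt p.1) (t := fun p => rtgt src tgt p.1)
    (fun p => rcost c p.1 - μ) fun k hk cyc hcyc hinj => by
      have := hμ _ ⟨k, hk, _, fun i => (cyc i).2, hcyc, hinj, rfl⟩
      rw [le_div_iff₀ (by exact_mod_cast hk)] at this
      simpa [sum_sub_distrib, mul_comm] using this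
  exact ⟨π, fun p hp => by have := hπ ⟨p, hp⟩; simp only [redcost]; linarith⟩

theorem neg_mem_epsOptimalSet {μ : ℝ} (hμ₀ : μ ≤ 0)
    (hμ : ∀ q ∈ residualCycleMeans src tgt cap c x, μ ≤ q) :
    -μ ∈ epsOptimalSet src tgt cap c x := by
  obtain ⟨π, hπ⟩ := exists_le_redcost_of_le_residualCycleMeans hμ
  exact ⟨by linarith, π, fun p hp => by simpa using hπ p hp⟩

theorem epsOptimalSet_nonempty : (epsOptimalSet src tgt cap c x).Nonempty := by
  refine ⟨∑ p, |(rcost c p : ℝ)|, sum_nonneg fun p _ => abs_nonneg _, 0, fun p _ => ?_⟩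
  have := single_le_sum (fun p _ => abs_nonneg (rcost c p : ℝ)) (mem_univ p)
  have := neg_abs_le (rcost c p : ℝ)
  simp only [redcost, Pi.zero_apply, add_zero, sub_zero]
  linarith

variable [DecidableEq V] {b : V → ℤ}

theorem csInf_epsOptimalSet_of_isOptimal (hopt : IsOptimal src tgt b cap c x) :
    sInf (epsOptimalSet src tgt cap c x) = 0 := by
  have hμ (q) (hq : q ∈ residualCycleMeans src tgt cap c x) : 0 ≤ q := by
    obtain ⟨k, hk, cyc, hres, hcyc, hinj, rfl⟩ := hq
    by_contra! hneg
    have hsum : ∑ i, (rcost c (cyc i) : ℝ) < 0 := by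
      simpa using (div_lt_iff₀ (by exact_mod_cast hk : (0 : ℝ) < k)).1 hneg
    exact not_isOptimal_of_sum_rcost_neg hopt.1 hres hcyc hinj (by exact_mod_cast hsum) hopt
  have h₀ : (0 : ℝ) ∈ epsOptimalSet src tgt cap c x := by
    simpa using neg_mem_epsOptimalSet le_rfl hμ
  exact IsLeast.csInf_eq ⟨h₀, fun e he => he.1⟩

theorem csInf_epsOptimalSet_of_not_isOptimal (hx : IsFeasible src tgt b cap x)
    (hnopt : ¬IsOptimal src tgt b cap c x) :
    sInf (epsOptimalSet src tgt cap c x) = -sInf (residualCycleMeans src tgt cap c x) := by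
  obtain ⟨q, hq, hneg⟩ : ∃ q ∈ residualCycleMeans src tgt cap c x, q < 0 := by
    by_contra! hμ
    obtain ⟨π, hπ⟩ := exists_le_redcost_of_le_residualCycleMeans hμ
    exact hnopt (isOptimal_of_redcost_nonneg hx π hπ)
  obtain ⟨e₀, he₀⟩ : (epsOptimalSet src tgt cap c x).Nonempty := epsOptimalSet_nonempty
  have hbdd : BddBelow (residualCycleMeans src tgt cap c x) :=
    ⟨-e₀, fun q hq => neg_le_of_mem_residualCycleMeans he₀ hq⟩
  refine IsLeast.csInf_eq ⟨neg_mem_epsOptimalSet ((csInf_le hbdd hq).trans hneg.le)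
    fun q hq => csInf_le hbdd hq, fun e he => ?_⟩
  exact neg_le.1 (le_csInf ⟨q, hq⟩ fun q hq => neg_le_of_mem_residualCycleMeans he hq)

end EpsOptimality

theorem eps_x_eq_neg_min_mean_cycle_general [Fintype A] [DecidableEq V]
    (src tgt : A → V) (b : V → ℤ) (cap c x : A → ℤ)
    (hx : IsFeasible src tgt b cap x) :
    (¬ IsOptimal src tgt b cap c x →
      sInf {e : ℝ | 0 ≤ e ∧ ∃ π : V → ℝ, ∀ p : A × Bool, IsResidual cap x p →
          -e ≤ redcost src tgt c π p}
        = - sInf {q : ℝ | ∃ (k : ℕ) (hk : 0 < k) (cyc : Fin k → A × Bool),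
            (∀ i, IsResidual cap x (cyc i)) ∧
            IsCycle (rsrc src tgt) (rtgt src tgt) hk cyc ∧
            Function.Injective (fun i => rsrc src tgt (cyc i)) ∧
            q = (∑ i, (rcost c (cyc i) : ℝ)) / (k : ℝ)}) ∧
    (IsOptimal src tgt b cap c x →
      sInf {e : ℝ | 0 ≤ e ∧ ∃ π : V → ℝ, ∀ p : A × Bool, IsResidual cap x p →
          -e ≤ redcost src tgt c π p} = 0) :=
  ⟨csInf_epsOptimalSet_of_not_isOptimal hx, csInf_epsOptimalSet_of_isOptimal⟩

/-- for a non-optimal feasible flow, the smallest `ε ≥ 0` for which it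
is `ε`-optimal is the negative of the minimum mean cost of a residual directed
cycle; for an optimal flow this value is `0`. -/
theorem eps_x_eq_neg_min_mean_cycle [Fintype V] [Fintype A] [DecidableEq V]
    (src tgt : A → V) (b : V → ℤ) (cap c x : A → ℤ)
    (hx : IsFeasible src tgt b cap x) :
    (¬ IsOptimal src tgt b cap c x →
      sInf {e : ℝ | 0 ≤ e ∧ ∃ π : V → ℝ, ∀ p : A × Bool, IsResidual cap x p →
          -e ≤ redcost src tgt c π p}
        = - sInf {q : ℝ | ∃ (k : ℕ) (hk : 0 < k) (cyc : Fin k → A × Bool),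
            (∀ i, IsResidual cap x (cyc i)) ∧
            IsCycle (rsrc src tgt) (rtgt src tgt) hk cyc ∧
            Function.Injective (fun i => rsrc src tgt (cyc i)) ∧
            q = (∑ i, (rcost c (cyc i) : ℝ)) / (k : ℝ)}) ∧
    (IsOptimal src tgt b cap c x →
      sInf {e : ℝ | 0 ≤ e ∧ ∃ π : V → ℝ, ∀ p : A × Bool, IsResidual cap x p →
          -e ≤ redcost src tgt c π p} = 0) :=
  eps_x_eq_neg_min_mean_cycle_general src tgt b cap c x hx
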